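/- arXiv:2011.09758 — 2 statements merged into one kernel-verified Lean document; each statement's English description precedes it below -/
import Mathlib

section
/- Let U be a submodular universe, k ∈ ℕ, and P a regular k-profile in U. Let D_P ⊆ P be a set containing, for every regular k-profile P' ≠ P in U, a separation which efficiently distinguishes P from P', and let m be the number of maximal elements of D_P. Then there is a star σ ⊆ P of size at most m having property Eff(P) such that every regular k-profile in U other than P contains the inverse of some element of σ (i.e. δ_e(P) ≤ m). -/
namespace SepDemo

/-- A universe of separations: a finite lattice with an order-reversing involution. -/
structure SepUniverse (U : Type*) [Lattice U] [Fintype U] where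
  inv : U → U
  inv_inv : ∀ s, inv (inv s) = s
  le_iff : ∀ r s : U, r ≤ s ↔ inv s ≤ inv r

/-- A submodular universe: a universe with a submodular order function. -/
structure SubmodUniverse (U : Type*) [Lattice U] [Fintype U] extends SepUniverse U where
  ord : U → ℕ
  ord_inv : ∀ s, ord (inv s) = ord s
  submod : ∀ s t : U, ord (s ⊔ t) + ord (s ⊓ t) ≤ ord s + ord t

variable {U : Type*} [Lattice U] [Fintype U]

/-- A separation system inside a universe: a subset closed under the involution. -/
def SepSystem (𝒰 : SepUniverse U) (S : Set U) : Prop :=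
  ∀ s ∈ S, 𝒰.inv s ∈ S

/-- An orientation of `S`: contains, for each `s ∈ S`, exactly one of `s`, `s*`
(just `s` itself if `s` is degenerate). -/
def IsOrientation (𝒰 : SepUniverse U) (S O : Set U) : Prop :=
  O ⊆ S ∧ ∀ s ∈ S, (s ∈ O ∨ 𝒰.inv s ∈ O) ∧ (s ∈ O → 𝒰.inv s ∈ O → s = 𝒰.inv s)

/-- Consistency: no `r, s ∈ O` with `{r,r*} ≠ {s,s*}` and `r* ≤ s`. -/
def Consistent (𝒰 : SepUniverse U) (O : Set U) : Prop :=
  ∀ r ∈ O, ∀ s ∈ O, ({r, 𝒰.inv r} : Set U) ≠ ({s, 𝒰.inv s} : Set U) → ¬ 𝒰.inv r ≤ s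

/-- A profile of `S`: a consistent orientation satisfying the profile property. -/
def IsProfile (𝒰 : SepUniverse U) (S P : Set U) : Prop :=
  IsOrientation 𝒰 S P ∧ Consistent 𝒰 P ∧ ∀ r ∈ P, ∀ s ∈ P, 𝒰.inv (r ⊔ s) ∉ P

/-- Regular: contains no cosmall separation. -/
def Regular (𝒰 : SepUniverse U) (P : Set U) : Prop :=
  ∀ s ∈ P, ¬ 𝒰.inv s ≤ s

/-- Two separations are nested. -/
def Nested (𝒰 : SepUniverse U) (r s : U) : Prop :=
  r ≤ s ∨ r ≤ 𝒰.inv s ∨ 𝒰.inv r ≤ s ∨ 𝒰.inv r ≤ 𝒰.inv s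

/-- A set of separations is nested if its members are pairwise nested. -/
def NestedSet (𝒰 : SepUniverse U) (N : Set U) : Prop :=
  ∀ r ∈ N, ∀ s ∈ N, Nested 𝒰 r s

/-- `s` distinguishes the orientations `O₁` and `O₂`. -/
def Distinguishes (𝒰 : SepUniverse U) (s : U) (O₁ O₂ : Set U) : Prop :=
  (s ∈ O₁ ∧ 𝒰.inv s ∈ O₂) ∨ (𝒰.inv s ∈ O₁ ∧ s ∈ O₂)

/-- Two orientations are distinguishable. -/
def Distinguishable (𝒰 : SepUniverse U) (P Q : Set U) : Prop :=
  ∃ s : U, Distinguishes 𝒰 s P Q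

/-- Structural submodularity of a separation system. -/
def StructSubmodular (S : Set U) : Prop :=
  ∀ s ∈ S, ∀ t ∈ S, s ⊔ t ∈ S ∨ s ⊓ t ∈ S

/-- `s` is trivial in `S`. -/
def IsTrivialIn (𝒰 : SepUniverse U) (S : Set U) (s : U) : Prop :=
  ∃ r ∈ S, ({r, 𝒰.inv r} : Set U) ≠ ({s, 𝒰.inv s} : Set U) ∧ s ≤ r ∧ s ≤ 𝒰.inv r

/-- A star of separations. -/
def IsStar (𝒰 : SepUniverse U) (σ : Set U) : Prop :=
  ∀ r ∈ σ, ∀ s ∈ σ, r ≠ s → r ≤ 𝒰.inv s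

/-- The shift `σ_x^{s₀}` of a star `σ` at `x ∈ σ` to `s₀`. -/
def shiftStar (𝒰 : SepUniverse U) (σ : Set U) (x s₀ : U) : Set U :=
  insert (x ⊔ s₀) ((fun y => y ⊓ 𝒰.inv s₀) '' (σ \ {x}))

/-- `s₀` emulates `r` in `S`. -/
def Emulates (𝒰 : SepUniverse U) (S : Set U) (s₀ r : U) : Prop :=
  r ≤ s₀ ∧ ∀ t ∈ S, t ≠ 𝒰.inv r → r ≤ t → t ⊔ s₀ ∈ S

/-- `s₀` emulates `r` in `S` for a set `F` of stars. -/
def EmulatesFor (𝒰 : SepUniverse U) (S : Set U) (F : Set (Set U)) (s₀ r : U) : Prop :=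
  Emulates 𝒰 S s₀ r ∧
    ∀ σ ∈ F, 𝒰.inv r ∉ σ → ∀ x ∈ σ, r ≤ x → shiftStar 𝒰 σ x s₀ ∈ F

/-- `F` forces `s`. -/
def Forces (𝒰 : SepUniverse U) (F : Set (Set U)) (s : U) : Prop :=
  ({𝒰.inv s} : Set U) ∈ F

/-- `S` is `F`-separable. -/
def FSeparable (𝒰 : SepUniverse U) (S : Set U) (F : Set (Set U)) : Prop :=
  ∀ r₁ ∈ S, ∀ r₂ ∈ S,
    ¬ IsTrivialIn 𝒰 S r₁ → ¬ IsTrivialIn 𝒰 S r₂ →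
    r₁ ≠ 𝒰.inv r₁ → r₂ ≠ 𝒰.inv r₂ →
    ¬ Forces 𝒰 F r₁ → ¬ Forces 𝒰 F r₂ →
    r₁ ≤ 𝒰.inv r₂ →
    ∃ s₀ ∈ S, r₁ ≤ s₀ ∧ s₀ ≤ 𝒰.inv r₂ ∧
      EmulatesFor 𝒰 S F s₀ r₁ ∧ EmulatesFor 𝒰 S F (𝒰.inv s₀) r₂

/-- `r` is `F`-critical. -/
def FCritical (𝒰 : SepUniverse U) (F : Set (Set U)) (r : U) : Prop :=
  (∃ σ ∈ F, r ∈ σ) ∧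
    ¬ ∃ σ' ∈ F, σ' ∩ ({r, 𝒰.inv r} : Set U) = ({𝒰.inv r} : Set U)

/-- `S` is critically `F`-separable. -/
def CritFSeparable (𝒰 : SepUniverse U) (S : Set U) (F : Set (Set U)) : Prop :=
  ∀ r₁ ∈ S, ∀ r₂ ∈ S, FCritical 𝒰 F r₁ → FCritical 𝒰 F r₂ → r₁ ≤ 𝒰.inv r₂ →
    ∃ s₀ ∈ S, EmulatesFor 𝒰 S F s₀ r₁ ∧ EmulatesFor 𝒰 S F (𝒰.inv s₀) r₂

/-- An `F`-tangle of `S`: a consistent orientation including no member of `F`. -/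
def FTangle (𝒰 : SepUniverse U) (S : Set U) (F : Set (Set U)) (O : Set U) : Prop :=
  IsOrientation 𝒰 S O ∧ Consistent 𝒰 O ∧ ∀ σ ∈ F, ¬ σ ⊆ O

/-- `F` is standard for `S`: it forces all trivial separations of `S`. -/
def StandardFor (𝒰 : SepUniverse U) (S : Set U) (F : Set (Set U)) : Prop :=
  ∀ r ∈ S, IsTrivialIn 𝒰 S r → ({𝒰.inv r} : Set U) ∈ F

/-- An `S`-tree: a finite tree together with edge labels in `S` commuting with
the involution. -/
structure STree (𝒰 : SepUniverse U) (S : Set U) where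
  V : Type
  fintypeV : Fintype V
  G : SimpleGraph V
  isTree : G.IsTree
  label : V → V → U
  label_mem : ∀ x y, G.Adj x y → label x y ∈ S
  label_inv : ∀ x y, G.Adj x y → label y x = 𝒰.inv (label x y)

namespace STree

variable {𝒰 : SepUniverse U} {S : Set U}

/-- The star `α(t)` associated with a node `t`. -/
def nodeStar (T : STree 𝒰 S) (t : T.V) : Set U :=
  {u | ∃ s, T.G.Adj s t ∧ T.label s t = u}

/-- The `S`-tree is over `F`. -/
def Over (T : STree 𝒰 S) (F : Set (Set U)) : Prop :=
  ∀ t : T.V, T.nodeStar t ∈ F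

/-- Irredundance of an `S`-tree. -/
def Irredundant (T : STree 𝒰 S) : Prop :=
  ∀ t t' t'' : T.V, T.G.Adj t' t → T.G.Adj t'' t → t' ≠ t'' →
    T.label t' t ≠ T.label t'' t

/-- The set of edge labels of the tree. -/
def labels (T : STree 𝒰 S) : Set U :=
  {u | ∃ x y, T.G.Adj x y ∧ T.label x y = u}

/-- `t` is a sink of the orientation of the tree induced by `P`. -/
def IsSinkOf (T : STree 𝒰 S) (P : Set U) (t : T.V) : Prop :=
  ∀ s, T.G.Adj s t → T.label s t ∈ P

/-- The degree of a node. -/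
noncomputable def deg (T : STree 𝒰 S) (t : T.V) : ℕ :=
  (T.G.neighborSet t).ncard

/-- The maximum degree of the tree. -/
noncomputable def maxDeg (T : STree 𝒰 S) : ℕ :=
  sSup {n | ∃ t : T.V, T.deg t = n}

end STree

/-- A tree of tangles for `S`: an irredundant `S`-tree whose edge labels
distinguish every two distinct regular profiles of `S`. -/
def TreeOfTangles (𝒰 : SepUniverse U) (S : Set U) (T : STree 𝒰 S) : Prop :=
  T.Irredundant ∧
    ∀ P Q : Set U, IsProfile 𝒰 S P → Regular 𝒰 P → IsProfile 𝒰 S Q → Regular 𝒰 Q →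
      P ≠ Q → ∃ s ∈ T.labels, Distinguishes 𝒰 s P Q

/-- `δ(P)`: the minimum size of a subset of `P` distinguishing `P` from every
other regular profile of `S`. -/
noncomputable def deltaP (𝒰 : SepUniverse U) (S P : Set U) : ℕ :=
  sInf {n | ∃ D : Set U, D ⊆ P ∧ D.ncard = n ∧
    ∀ Q : Set U, IsProfile 𝒰 S Q → Regular 𝒰 Q → Q ≠ P →
      ∃ s ∈ D, Distinguishes 𝒰 s P Q}

/-- `S_k`: the separations of order less than `k`. -/
def Sk (𝒱 : SubmodUniverse U) (k : ℕ) : Set U := {s | 𝒱.ord s < k}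

/-- `s` distinguishes `P` and `Q` efficiently. -/
def EffDistinguishes (𝒱 : SubmodUniverse U) (s : U) (P Q : Set U) : Prop :=
  Distinguishes 𝒱.toSepUniverse s P Q ∧
    ∀ t : U, Distinguishes 𝒱.toSepUniverse t P Q → 𝒱.ord s ≤ 𝒱.ord t

/-- Property `Eff(P)` of a star `σ`. -/
def EffProp (𝒱 : SubmodUniverse U) (σ P : Set U) : Prop :=
  ¬ ∃ s ∈ σ, ∃ s' ∈ P, s ≤ s' ∧ 𝒱.ord s' < 𝒱.ord s

/-- `s` is a splice for `r`. -/
def SpliceFor (𝒱 : SubmodUniverse U) (s r : U) : Prop :=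
  r ≤ s ∧ ¬ ∃ t : U, r ≤ t ∧ t ≤ s ∧ 𝒱.ord t < 𝒱.ord s

/-- `s` is a splice between `r₁` and `r₂`. -/
def SpliceBetween (𝒱 : SubmodUniverse U) (s r₁ r₂ : U) : Prop :=
  r₁ ≤ s ∧ s ≤ r₂ ∧ ∀ t : U, r₁ ≤ t → t ≤ r₂ → 𝒱.ord s ≤ 𝒱.ord t

/-- The set `F_e` of stars in `S_k` included in at most one profile of `𝔓` and
satisfying `Eff(P)` whenever included in `P ∈ 𝔓`. -/
def Fe (𝒱 : SubmodUniverse U) (k : ℕ) (𝔓 : Set (Set U)) : Set (Set U) :=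
  {σ | σ ⊆ Sk 𝒱 k ∧ IsStar 𝒱.toSepUniverse σ ∧
    (∀ P ∈ 𝔓, ∀ Q ∈ 𝔓, σ ⊆ P → σ ⊆ Q → P = Q) ∧
    (∀ P ∈ 𝔓, σ ⊆ P → EffProp 𝒱 σ P)}

/-- `δ_e(P)`: the minimum size of a star `σ ⊆ P` with `Eff(P)` such that every
other regular profile of `S_k` contains the inverse of some element of `σ`. -/
noncomputable def deltaE (𝒱 : SubmodUniverse U) (k : ℕ) (P : Set U) : ℕ :=
  sInf {n | ∃ σ : Set U, σ ⊆ P ∧ IsStar 𝒱.toSepUniverse σ ∧ EffProp 𝒱 σ P ∧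
    σ.ncard = n ∧
    ∀ Q : Set U, IsProfile 𝒱.toSepUniverse (Sk 𝒱 k) Q → Regular 𝒱.toSepUniverse Q →
      Q ≠ P → ∃ s ∈ σ, 𝒱.inv s ∈ Q}

/-- `δ_{e,max}`: maximum of `δ_e` over all regular profiles of `S_k`. -/
noncomputable def deltaEMax (𝒱 : SubmodUniverse U) (k : ℕ) : ℕ :=
  sSup {n | ∃ P : Set U, IsProfile 𝒱.toSepUniverse (Sk 𝒱 k) P ∧
    Regular 𝒱.toSepUniverse P ∧ deltaE 𝒱 k P = n}

/-- `P` is a profile in `U`: a `k`-profile for some `k`. -/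
def ProfileIn (𝒱 : SubmodUniverse U) (P : Set U) : Prop :=
  ∃ k : ℕ, IsProfile 𝒱.toSepUniverse (Sk 𝒱 k) P

/-- Strong robustness of a profile. -/
def StronglyRobust (𝒱 : SubmodUniverse U) (P : Set U) : Prop :=
  ∀ s ∈ P, ∀ r : U, 𝒱.ord (s ⊔ r) ≤ 𝒱.ord s → 𝒱.ord (s ⊔ 𝒱.inv r) ≤ 𝒱.ord s →
    (s ⊔ r ∈ P ∨ s ⊔ 𝒱.inv r ∈ P)

/-- `O` weakly orients a separation as `s'` if `s' ≤ r` for some `r ∈ O`. -/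
def WeaklyOrientsAs (O : Set U) (s' : U) : Prop :=
  ∃ r ∈ O, s' ≤ r

/-- `O` weakly orients `s` (as `s` or as `s*`). -/
def WeaklyOrients (𝒰 : SepUniverse U) (O : Set U) (s : U) : Prop :=
  WeaklyOrientsAs O s ∨ WeaklyOrientsAs O (𝒰.inv s)

/-- The set `F_d` of stars, relative to the set of profiles `𝔓`. -/
def Fd (𝒱 : SubmodUniverse U) (𝔓 : Set (Set U)) : Set (Set U) :=
  {σ | IsStar 𝒱.toSepUniverse σ ∧
    (∀ P ∈ 𝔓, ∀ Q ∈ 𝔓, σ ⊆ P → σ ⊆ Q → P = Q) ∧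
    (∀ P ∈ 𝔓, ¬ σ ⊆ P → ∃ s ∈ σ, WeaklyOrientsAs P (𝒱.inv s)) ∧
    (∀ P ∈ 𝔓, σ ⊆ P → EffProp 𝒱 σ P)}

/-! Start from the maximal elements of `D`: they lie in `P`, and every other regular profile
contains the inverse of one of them, because a regular consistent orientation is down-closed.
Among all subsets of `P` with at most `m` elements and this covering property choose one that
minimises first the total order and then the total size of the down-closures of its elements.
Replacing an element `s` by some `s' ≥ s` of `P` of smaller order keeps the covering property,
so minimality gives `Eff(P)`. If two elements `r`, `s` cross, submodularity lets us replace `r`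
by `r ⊓ s*` (or `s` by `s ⊓ r*`) without raising the order, and the profile property keeps the
covering property, so minimality forces a star. -/

namespace SepUniverse

variable (𝒰 : SepUniverse U)

def invIso : U ≃o Uᵒᵈ where
  toFun s := OrderDual.toDual (𝒰.inv s)
  invFun s := 𝒰.inv (OrderDual.ofDual s)
  left_inv := 𝒰.inv_inv
  right_inv := 𝒰.inv_inv
  map_rel_iff' := (𝒰.le_iff _ _).symm

variable {𝒰}

theorem inv_le_inv {r s : U} (h : r ≤ s) : 𝒰.inv s ≤ 𝒰.inv r :=
  (𝒰.le_iff r s).1 h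

theorem le_inv_comm {r s : U} : r ≤ 𝒰.inv s ↔ s ≤ 𝒰.inv r := by
  rw [𝒰.le_iff r, 𝒰.inv_inv]

variable (𝒰) in
theorem inv_sup (r s : U) : 𝒰.inv (r ⊔ s) = 𝒰.inv r ⊓ 𝒰.inv s :=
  𝒰.invIso.map_sup r s

end SepUniverse

theorem SubmodUniverse.ord_inf_inv_le_or (𝒱 : SubmodUniverse U) (r s : U) :
    𝒱.ord (r ⊓ 𝒱.inv s) ≤ 𝒱.ord r ∨ 𝒱.ord (s ⊓ 𝒱.inv r) ≤ 𝒱.ord s := by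
  have hsub := 𝒱.submod r (𝒱.inv s)
  have hsup : 𝒱.ord (r ⊔ 𝒱.inv s) = 𝒱.ord (s ⊓ 𝒱.inv r) := by
    rw [← 𝒱.ord_inv, 𝒱.inv_sup, 𝒱.inv_inv, inf_comm]
  rw [𝒱.ord_inv] at hsub
  omega

theorem sepSystem_Sk (𝒱 : SubmodUniverse U) (k : ℕ) : SepSystem 𝒱.toSepUniverse (Sk 𝒱 k) :=
  fun s hs => (𝒱.ord_inv s).trans_lt hs

section Orientation

variable {𝒰 : SepUniverse U} {S O : Set U}

theorem Regular.inv_notMem (hreg : Regular 𝒰 O) (hO : IsOrientation 𝒰 S O) {s : U}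
    (hs : s ∈ O) : 𝒰.inv s ∉ O := fun h =>
  hreg s hs ((hO.2 s (hO.1 hs)).2 hs h).symm.le

theorem Regular.mem_of_le (hreg : Regular 𝒰 O) (hO : IsOrientation 𝒰 S O)
    (hC : Consistent 𝒰 O) {a b : U} (ha : a ∈ O) (hb : b ∈ S) (hba : b ≤ a) : b ∈ O := by
  refine (hO.2 b hb).1.resolve_right fun hb' => ?_
  by_cases hpair : ({𝒰.inv b, 𝒰.inv (𝒰.inv b)} : Set U) = {a, 𝒰.inv a}
  · have hmem : 𝒰.inv b ∈ ({a, 𝒰.inv a} : Set U) := hpair ▸ Set.mem_insert _ _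
    rcases hmem with rfl | hab
    · exact hreg _ ha (by rwa [𝒰.inv_inv])
    · exact hreg.inv_notMem hO ha (hab ▸ hb')
  · exact hC _ hb' a ha hpair (by rwa [𝒰.inv_inv])

theorem Regular.inv_mem_of_le (hreg : Regular 𝒰 O) (hO : IsOrientation 𝒰 S O)
    (hC : Consistent 𝒰 O) (hS : SepSystem 𝒰 S) {s t : U} (hs : 𝒰.inv s ∈ O) (ht : t ∈ S)
    (hst : s ≤ t) : 𝒰.inv t ∈ O :=
  hreg.mem_of_le hO hC hs (hS t ht) (SepUniverse.inv_le_inv hst)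

theorem IsProfile.inv_inf_inv_mem (hO : IsProfile 𝒰 S O) {r s : U} (hr : 𝒰.inv r ∈ O)
    (hs : s ∈ O) (hrs : r ⊓ 𝒰.inv s ∈ S) : 𝒰.inv (r ⊓ 𝒰.inv s) ∈ O :=
  (hO.1.2 _ hrs).1.resolve_left fun h =>
    hO.2.2 _ hr _ hs (by rwa [𝒰.inv_sup, 𝒰.inv_inv])

end Orientation

def Covers (𝒰 : SepUniverse U) (S P σ : Set U) : Prop :=
  ∀ Q : Set U, IsProfile 𝒰 S Q → Regular 𝒰 Q → Q ≠ P → ∃ s ∈ σ, 𝒰.inv s ∈ Q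

section Covers

variable {𝒰 : SepUniverse U} {S P : Set U}

theorem covers_maximals {D : Set U} (hS : SepSystem 𝒰 S) (hP : IsOrientation 𝒰 S P)
    (hreg : Regular 𝒰 P) (hD : D ⊆ P)
    (hdist : ∀ Q : Set U, IsProfile 𝒰 S Q → Regular 𝒰 Q → Q ≠ P →
      ∃ s ∈ D, Distinguishes 𝒰 s P Q) :
    Covers 𝒰 S P {s ∈ D | ∀ t ∈ D, s ≤ t → s = t} := by
  intro Q hQ hregQ hQP
  obtain ⟨s, hsD, hs⟩ := hdist Q hQ hregQ hQP
  have hsQ : 𝒰.inv s ∈ Q := (hs.resolve_right fun h => hreg.inv_notMem hP (hD hsD) h.1).2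
  obtain ⟨t, hst, ht⟩ := D.toFinite.exists_le_maximal hsD
  exact ⟨t, ⟨ht.prop, fun u hu htu => le_antisymm htu (ht.2 hu htu)⟩,
    hregQ.inv_mem_of_le hQ.1 hQ.2.1 hS hsQ (hP.1 (hD ht.prop)) hst⟩

theorem Covers.insert_erase [DecidableEq U] {σ : Finset U} (hσ : Covers 𝒰 S P σ) {r b : U}
    (hrb : ∀ Q : Set U, IsProfile 𝒰 S Q → Regular 𝒰 Q → 𝒰.inv r ∈ Q →
      ∃ s ∈ insert b (σ.erase r), 𝒰.inv s ∈ Q) :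
    Covers 𝒰 S P ↑(insert b (σ.erase r)) := by
  intro Q hQ hregQ hQP
  obtain ⟨s, hs, hsQ⟩ := hσ Q hQ hregQ hQP
  by_cases hsr : s = r
  · subst hsr
    exact hrb Q hQ hregQ hsQ
  · exact ⟨s, Finset.mem_insert_of_mem (Finset.mem_erase.2 ⟨hsr, hs⟩), hsQ⟩

end Covers

section LexWeight

variable {α : Type*}

theorem Finset.sum_insert_erase_add_le [DecidableEq α] (f : α → ℕ) {σ : Finset α} {r : α}
    (hr : r ∈ σ) (b : α) : ∑ x ∈ insert b (σ.erase r), f x + f r ≤ ∑ x ∈ σ, f x + f b := by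
  rw [← Finset.add_sum_erase σ f hr]
  by_cases hb : b ∈ σ.erase r
  · rw [Finset.insert_eq_of_mem hb]
    omega
  · rw [Finset.sum_insert hb]
    omega

noncomputable def lexWeight [Preorder α] (f : α → ℕ) (σ : Finset α) : ℕ ×ₗ ℕ :=
  toLex (∑ x ∈ σ, f x, ∑ x ∈ σ, (Set.Iic x).ncard)

theorem lexWeight_insert_erase_lt [Preorder α] [Finite α] [DecidableEq α] (f : α → ℕ)
    {σ : Finset α} {r b : α} (hr : r ∈ σ) (h : f b < f r ∨ f b ≤ f r ∧ b < r) :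
    lexWeight f (insert b (σ.erase r)) < lexWeight f σ := by
  have hf := Finset.sum_insert_erase_add_le f hr b
  have hIic := Finset.sum_insert_erase_add_le (fun x => (Set.Iic x).ncard) hr b
  rw [lexWeight, lexWeight, Prod.Lex.toLex_lt_toLex]
  rcases h with h | ⟨h, hbr⟩
  · left
    omega
  · have hlt : (Set.Iic b).ncard < (Set.Iic r).ncard :=
      Set.ncard_lt_ncard (Set.Iic_ssubset_Iic.2 hbr)
    omega

end LexWeight

def IsBoundedCover (𝒱 : SubmodUniverse U) (k m : ℕ) (P : Set U) (σ : Finset U) : Prop :=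
  ↑σ ⊆ P ∧ σ.card ≤ m ∧ Covers 𝒱.toSepUniverse (Sk 𝒱 k) P σ

section BoundedCover

variable {𝒱 : SubmodUniverse U} {k m : ℕ} {P : Set U} {σ : Finset U}

theorem IsBoundedCover.insert_erase [DecidableEq U] (hσ : IsBoundedCover 𝒱 k m P σ)
    {r b : U} (hr : r ∈ σ) (hb : b ∈ P)
    (hrb : ∀ Q : Set U, IsProfile 𝒱.toSepUniverse (Sk 𝒱 k) Q → Regular 𝒱.toSepUniverse Q →
      𝒱.inv r ∈ Q → ∃ s ∈ insert b (σ.erase r), 𝒱.inv s ∈ Q) :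
    IsBoundedCover 𝒱 k m P (insert b (σ.erase r)) := by
  refine ⟨?_, ?_, hσ.2.2.insert_erase hrb⟩
  · rw [Finset.coe_insert, Finset.coe_erase]
    exact Set.insert_subset hb (Set.sdiff_subset.trans hσ.1)
  · exact (Finset.card_insert_le _ _).trans ((Finset.card_erase_add_one hr).le.trans hσ.2.1)

theorem effProp_of_minimalFor (hPS : P ⊆ Sk 𝒱 k)
    (hσ : MinimalFor (IsBoundedCover 𝒱 k m P) (lexWeight 𝒱.ord) σ) : EffProp 𝒱 σ P := by
  classical
  rintro ⟨s, hs, s', hs', hss', hord⟩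
  refine hσ.not_lt (hσ.prop.insert_erase hs hs' fun Q hQ hregQ hsQ => ?_)
    (lexWeight_insert_erase_lt _ hs (Or.inl hord))
  exact ⟨s', Finset.mem_insert_self _ _,
    hregQ.inv_mem_of_le hQ.1 hQ.2.1 (sepSystem_Sk 𝒱 k) hsQ (hPS hs') hss'⟩

theorem le_inv_of_minimalFor (hP : IsOrientation 𝒱.toSepUniverse (Sk 𝒱 k) P)
    (hC : Consistent 𝒱.toSepUniverse P) (hreg : Regular 𝒱.toSepUniverse P)
    (hσ : MinimalFor (IsBoundedCover 𝒱 k m P) (lexWeight 𝒱.ord) σ) {r s : U} (hr : r ∈ σ)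
    (hs : s ∈ σ) (hrs : r ≠ s) (hord : 𝒱.ord (r ⊓ 𝒱.inv s) ≤ 𝒱.ord r) : r ≤ 𝒱.inv s := by
  classical
  by_contra hcross
  have hbS : r ⊓ 𝒱.inv s ∈ Sk 𝒱 k := hord.trans_lt (hP.1 (hσ.prop.1 hr))
  have hbP : r ⊓ 𝒱.inv s ∈ P := hreg.mem_of_le hP hC (hσ.prop.1 hr) hbS inf_le_left
  have hlt : r ⊓ 𝒱.inv s < r := inf_le_left.lt_of_ne fun h => hcross (inf_eq_left.1 h)
  refine hσ.not_lt (hσ.prop.insert_erase hr hbP fun Q hQ hregQ hrQ => ?_)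
    (lexWeight_insert_erase_lt _ hr (Or.inr ⟨hord, hlt⟩))
  rcases (hQ.1.2 s (hP.1 (hσ.prop.1 hs))).1 with hsQ | hsQ
  · exact ⟨_, Finset.mem_insert_self _ _, hQ.inv_inf_inv_mem hrQ hsQ hbS⟩
  · exact ⟨s, Finset.mem_insert_of_mem (Finset.mem_erase.2 ⟨Ne.symm hrs, hs⟩), hsQ⟩

theorem isStar_of_minimalFor (hP : IsOrientation 𝒱.toSepUniverse (Sk 𝒱 k) P)
    (hC : Consistent 𝒱.toSepUniverse P) (hreg : Regular 𝒱.toSepUniverse P)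
    (hσ : MinimalFor (IsBoundedCover 𝒱 k m P) (lexWeight 𝒱.ord) σ) :
    IsStar 𝒱.toSepUniverse σ := by
  intro r hr s hs hrs
  rcases 𝒱.ord_inf_inv_le_or r s with h | h
  · exact le_inv_of_minimalFor hP hC hreg hσ hr hs hrs h
  · exact SepUniverse.le_inv_comm.2 (le_inv_of_minimalFor hP hC hreg hσ hs hr hrs.symm h)

end BoundedCover

/-- If `D_P ⊆ P` contains, for every regular `k`-profile
`P' ≠ P`, an efficient `P`–`P'`-distinguisher, and `m` is the number of maximal
elements of `D_P`, then `δ_e(P) ≤ m`: there is a star `σ ⊆ P` of size at most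
`m` with `Eff(P)` whose inverse elements meet every other regular `k`-profile. -/
theorem deltaE_le_max_elements (𝒱 : SubmodUniverse U) (k : ℕ)
    (P : Set U) (hP : IsProfile 𝒱.toSepUniverse (Sk 𝒱 k) P)
    (hreg : Regular 𝒱.toSepUniverse P)
    (D : Set U) (hD : D ⊆ P)
    (hdist : ∀ P' : Set U, IsProfile 𝒱.toSepUniverse (Sk 𝒱 k) P' →
      Regular 𝒱.toSepUniverse P' → P' ≠ P → ∃ s ∈ D, EffDistinguishes 𝒱 s P P')
    (m : ℕ) (hm : m = {s ∈ D | ∀ t ∈ D, s ≤ t → s = t}.ncard) :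
    ∃ σ : Set U, σ ⊆ P ∧ IsStar 𝒱.toSepUniverse σ ∧ EffProp 𝒱 σ P ∧ σ.ncard ≤ m ∧
      ∀ Q : Set U, IsProfile 𝒱.toSepUniverse (Sk 𝒱 k) Q → Regular 𝒱.toSepUniverse Q →
        Q ≠ P → ∃ s ∈ σ, 𝒱.inv s ∈ Q := by
  classical
  set M := {s ∈ D | ∀ t ∈ D, s ≤ t → s = t}
  have hM : IsBoundedCover 𝒱 k m P M.toFinite.toFinset := by
    refine ⟨?_, ?_, ?_⟩
    · rw [Set.Finite.coe_toFinset]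
      exact fun s hs => hD hs.1
    · rw [hm, Set.ncard_eq_toFinset_card _ M.toFinite]
    · rw [Set.Finite.coe_toFinset]
      exact covers_maximals (sepSystem_Sk 𝒱 k) hP.1 hreg hD fun Q hQ hregQ hQP =>
        (hdist Q hQ hregQ hQP).imp fun _ => And.imp_right And.left
  obtain ⟨σ, hσ⟩ : ∃ σ, MinimalFor (IsBoundedCover 𝒱 k m P) (lexWeight 𝒱.ord) σ :=
    Set.Finite.exists_minimalFor _ {τ | IsBoundedCover 𝒱 k m P τ} (Set.toFinite _) ⟨_, hM⟩
  exact ⟨σ, hσ.prop.1, isStar_of_minimalFor hP.1 hP.2.1 hreg hσ,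
    effProp_of_minimalFor hP.1.1 hσ, (Set.ncard_coe_finset σ).trans_le hσ.prop.2.1, hσ.prop.2.2⟩

end SepDemo
end

section
/- Let U be a submodular distributive universe of separations. Then for every set 𝒫 of pairwise distinguishable strongly robust profiles in U there is a nested set T ⊆ U of separations such that every two profiles in 𝒫 are efficiently distinguished by some separation in T. -/
namespace SepDemo

variable {U : Type*} [Lattice U] [Fintype U]

section EffAux

variable {W : Type*} [DistribLattice W] [Fintype W]

/-! ### Basic involution lemmas -/

variable {𝒱 : SubmodUniverse W}

lemma SubmodUniverse.le_inv_iff (𝒱 : SubmodUniverse W) (a b : W) :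
    a ≤ 𝒱.inv b ↔ b ≤ 𝒱.inv a := by
  rw [𝒱.le_iff a (𝒱.inv b), 𝒱.inv_inv]

lemma SubmodUniverse.inv_le_iff (𝒱 : SubmodUniverse W) (a b : W) :
    𝒱.inv a ≤ b ↔ 𝒱.inv b ≤ a := by
  rw [𝒱.le_iff (𝒱.inv a) b, 𝒱.inv_inv]

lemma SubmodUniverse.inv_le_inv (𝒱 : SubmodUniverse W) (a b : W) :
    𝒱.inv a ≤ 𝒱.inv b ↔ b ≤ a := (𝒱.le_iff b a).symm

lemma SubmodUniverse.inv_inj (𝒱 : SubmodUniverse W) {a b : W}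
    (h : 𝒱.inv a = 𝒱.inv b) : a = b := by
  have := congrArg 𝒱.inv h
  rwa [𝒱.inv_inv, 𝒱.inv_inv] at this

lemma SubmodUniverse.inv_sup (𝒱 : SubmodUniverse W) (a b : W) :
    𝒱.inv (a ⊔ b) = 𝒱.inv a ⊓ 𝒱.inv b := by
  apply le_antisymm
  · exact le_inf ((𝒱.inv_le_inv _ _).2 le_sup_left) ((𝒱.inv_le_inv _ _).2 le_sup_right)
  · rw [𝒱.le_inv_iff]
    exact sup_le ((𝒱.le_inv_iff _ _).2 inf_le_left) ((𝒱.le_inv_iff _ _).2 inf_le_right)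

lemma SubmodUniverse.inv_inf (𝒱 : SubmodUniverse W) (a b : W) :
    𝒱.inv (a ⊓ b) = 𝒱.inv a ⊔ 𝒱.inv b := by
  have h := 𝒱.inv_sup (𝒱.inv a) (𝒱.inv b)
  rw [𝒱.inv_inv, 𝒱.inv_inv] at h
  rw [← h, 𝒱.inv_inv]

/-! ### Profile lemmas -/

lemma prof_ord_lt {k : ℕ} {P : Set W}
    (hP : IsProfile 𝒱.toSepUniverse (Sk 𝒱 k) P) {x : W} (hx : x ∈ P) :
    𝒱.ord x < k := hP.1.1 hx

lemma prof_orient {k : ℕ} {P : Set W}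
    (hP : IsProfile 𝒱.toSepUniverse (Sk 𝒱 k) P) {x : W} (hx : 𝒱.ord x < k) :
    x ∈ P ∨ 𝒱.inv x ∈ P := (hP.1.2 x hx).1

lemma prof_not_inv {k : ℕ} {P : Set W}
    (hP : IsProfile 𝒱.toSepUniverse (Sk 𝒱 k) P) {x : W} (hx : x ∈ P) :
    𝒱.inv x ∉ P := by
  have h := hP.2.2 x hx x hx
  rwa [sup_idem] at h

lemma prof_down {k : ℕ} {P : Set W}
    (hP : IsProfile 𝒱.toSepUniverse (Sk 𝒱 k) P) {x y : W} (hx : x ∈ P)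
    (hyx : y ≤ x) (hy : 𝒱.ord y < k) (hne : y ≠ 𝒱.inv x) : y ∈ P := by
  rcases prof_orient hP hy with h | h
  · exact h
  by_cases hxy : y = x
  · rwa [hxy]
  exfalso
  refine hP.2.1 (𝒱.inv y) h x hx ?_ (by rw [𝒱.inv_inv]; exact hyx)
  rw [𝒱.inv_inv]
  intro hset
  have hx' : x ∈ ({𝒱.inv y, y} : Set W) := by
    rw [hset]; exact Or.inl rfl
  rcases hx' with h1 | h2
  · exact hne (by rw [h1, 𝒱.inv_inv])
  · exact hxy h2.symm

lemma prof_sup {k : ℕ} {P : Set W}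
    (hP : IsProfile 𝒱.toSepUniverse (Sk 𝒱 k) P) {x y : W} (hx : x ∈ P)
    (hy : y ∈ P) (h : 𝒱.ord (x ⊔ y) < k) : x ⊔ y ∈ P :=
  (prof_orient hP h).resolve_right (hP.2.2 x hx y hy)

end EffAux
section EffAux2

variable {W : Type*} [DistribLattice W] [Fintype W] {𝒱 : SubmodUniverse W}

/-! ### Minimal-order distinguishers -/

/-- Minimal order of a separation distinguishing `P` and `Q`. -/
noncomputable def kOf (𝒱 : SubmodUniverse W) (P Q : Set W) : ℕ :=
  sInf {n | ∃ t, Distinguishes 𝒱.toSepUniverse t P Q ∧ 𝒱.ord t = n}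

/-- The minimal-order distinguishers of `P` and `Q`, oriented towards `Q`. -/
def Dmin (𝒱 : SubmodUniverse W) (P Q : Set W) : Set W :=
  {x | 𝒱.inv x ∈ P ∧ x ∈ Q ∧ 𝒱.ord x = kOf 𝒱 P Q}

lemma kOf_le {P Q : Set W} {t : W} (h : Distinguishes 𝒱.toSepUniverse t P Q) :
    kOf 𝒱 P Q ≤ 𝒱.ord t := Nat.sInf_le ⟨t, h, rfl⟩

lemma distinguishes_comm {P Q : Set W} {t : W}
    (h : Distinguishes 𝒱.toSepUniverse t P Q) : Distinguishes 𝒱.toSepUniverse t Q P := by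
  rcases h with ⟨h1, h2⟩ | ⟨h1, h2⟩
  · exact Or.inr ⟨h2, h1⟩
  · exact Or.inl ⟨h2, h1⟩

lemma Dmin_nonempty {P Q : Set W} (h : Distinguishable 𝒱.toSepUniverse P Q) :
    (Dmin 𝒱 P Q).Nonempty := by
  obtain ⟨t, ht⟩ := h
  have hne : {n | ∃ t, Distinguishes 𝒱.toSepUniverse t P Q ∧ 𝒱.ord t = n}.Nonempty :=
    ⟨𝒱.ord t, t, ht, rfl⟩
  obtain ⟨t₀, ht₀, hord⟩ := Nat.sInf_mem hne
  rcases ht₀ with ⟨h1, h2⟩ | ⟨h1, h2⟩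
  · exact ⟨𝒱.inv t₀, by rw [𝒱.inv_inv]; exact h1, h2, by rw [𝒱.ord_inv]; exact hord⟩
  · exact ⟨t₀, h1, h2, hord⟩

lemma Dmin_dist {P Q : Set W} {x : W} (hx : x ∈ Dmin 𝒱 P Q) :
    Distinguishes 𝒱.toSepUniverse x P Q := Or.inr ⟨hx.1, hx.2.1⟩

lemma Dmin_eff {P Q : Set W} {x : W} (hx : x ∈ Dmin 𝒱 P Q) :
    EffDistinguishes 𝒱 x P Q :=
  ⟨Dmin_dist hx, fun t ht => by rw [hx.2.2]; exact kOf_le ht⟩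

/-! ### Nestedness -/

lemma nested_symm {r s : W} (h : Nested 𝒱.toSepUniverse r s) :
    Nested 𝒱.toSepUniverse s r := by
  rcases h with h | h | h | h
  · exact Or.inr (Or.inr (Or.inr ((𝒱.inv_le_inv _ _).2 h)))
  · exact Or.inr (Or.inl ((𝒱.le_inv_iff _ _).1 h))
  · exact Or.inr (Or.inr (Or.inl ((𝒱.inv_le_iff _ _).1 h)))
  · exact Or.inl ((𝒱.inv_le_inv _ _).1 h)

lemma nested_self (𝒱 : SubmodUniverse W) (r : W) : Nested 𝒱.toSepUniverse r r :=
  Or.inl le_rfl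

lemma nested_inv_right {r s : W} :
    Nested 𝒱.toSepUniverse r (𝒱.inv s) ↔ Nested 𝒱.toSepUniverse r s := by
  unfold Nested
  rw [𝒱.inv_inv]
  tauto

lemma nested_inv_left {r s : W} :
    Nested 𝒱.toSepUniverse (𝒱.inv r) s ↔ Nested 𝒱.toSepUniverse r s := by
  unfold Nested
  rw [𝒱.inv_inv]
  tauto

lemma fish_sup {r s t : W} (hcross : ¬ Nested 𝒱.toSepUniverse r s)
    (htr : Nested 𝒱.toSepUniverse t r) (hts : Nested 𝒱.toSepUniverse t s) :
    Nested 𝒱.toSepUniverse t (r ⊔ s) := by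
  rcases htr with h1 | h1 | h1 | h1
  · exact Or.inl (h1.trans le_sup_left)
  · rcases hts with h2 | h2 | h2 | h2
    · exact Or.inl (h2.trans le_sup_right)
    · refine Or.inr (Or.inl ?_)
      rw [𝒱.inv_sup]
      exact le_inf h1 h2
    · exact Or.inr (Or.inr (Or.inl (h2.trans le_sup_right)))
    · exfalso
      have hst : s ≤ t := (𝒱.inv_le_inv _ _).1 h2
      exact hcross (Or.inr (Or.inl ((𝒱.le_inv_iff _ _).1 (hst.trans h1))))
  · exact Or.inr (Or.inr (Or.inl (h1.trans le_sup_left)))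
  · have hrt : r ≤ t := (𝒱.inv_le_inv _ _).1 h1
    rcases hts with h2 | h2 | h2 | h2
    · exact absurd (Or.inl (hrt.trans h2)) hcross
    · exact absurd (Or.inr (Or.inl (hrt.trans h2))) hcross
    · exact Or.inr (Or.inr (Or.inl (h2.trans le_sup_right)))
    · have hst : s ≤ t := (𝒱.inv_le_inv _ _).1 h2
      exact Or.inr (Or.inr (Or.inr ((𝒱.inv_le_inv _ _).2 (sup_le hrt hst))))

lemma fish {r s t c : W} (hcross : ¬ Nested 𝒱.toSepUniverse r s)
    (htr : Nested 𝒱.toSepUniverse t r) (hts : Nested 𝒱.toSepUniverse t s)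
    (hc : c = r ⊔ s ∨ c = r ⊔ 𝒱.inv s ∨ c = r ⊓ s ∨ c = r ⊓ 𝒱.inv s) :
    Nested 𝒱.toSepUniverse t c := by
  have hts' : Nested 𝒱.toSepUniverse t (𝒱.inv s) := nested_inv_right.2 hts
  have htr' : Nested 𝒱.toSepUniverse t (𝒱.inv r) := nested_inv_right.2 htr
  have hcross' : ¬ Nested 𝒱.toSepUniverse r (𝒱.inv s) := fun h => hcross (nested_inv_right.1 h)
  have hcrossinv : ¬ Nested 𝒱.toSepUniverse (𝒱.inv r) (𝒱.inv s) :=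
    fun h => hcross (nested_inv_right.1 (nested_inv_left.1 h))
  have hcrossinv' : ¬ Nested 𝒱.toSepUniverse (𝒱.inv r) s :=
    fun h => hcross (nested_inv_left.1 h)
  rcases hc with rfl | rfl | rfl | rfl
  · exact fish_sup hcross htr hts
  · exact fish_sup hcross' htr hts'
  · have he : r ⊓ s = 𝒱.inv (𝒱.inv r ⊔ 𝒱.inv s) := by
      rw [𝒱.inv_sup, 𝒱.inv_inv, 𝒱.inv_inv]
    rw [he]
    exact nested_inv_right.2 (fish_sup hcrossinv htr' hts')
  · have he : r ⊓ 𝒱.inv s = 𝒱.inv (𝒱.inv r ⊔ s) := by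
      rw [𝒱.inv_sup, 𝒱.inv_inv]
    rw [he]
    exact nested_inv_right.2 (fish_sup hcrossinv' htr' hts)

lemma corner_nested {r s c : W}
    (hc : c = r ⊔ s ∨ c = r ⊔ 𝒱.inv s ∨ c = r ⊓ s ∨ c = r ⊓ 𝒱.inv s) :
    Nested 𝒱.toSepUniverse c s := by
  rcases hc with rfl | rfl | rfl | rfl
  · exact Or.inr (Or.inr (Or.inr ((𝒱.inv_le_inv _ _).2 le_sup_right)))
  · refine Or.inr (Or.inr (Or.inl ?_))
    have h : 𝒱.inv (r ⊔ 𝒱.inv s) ≤ 𝒱.inv (𝒱.inv s) := (𝒱.inv_le_inv _ _).2 le_sup_right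
    rwa [𝒱.inv_inv] at h
  · exact Or.inl inf_le_right
  · exact Or.inr (Or.inl inf_le_right)

end EffAux2
section EffAux3

variable {W : Type*} [DistribLattice W] [Fintype W] {𝒱 : SubmodUniverse W}

/-- Case of oppositely oriented `s'`: the corner `r ⊔ s'` is again a
minimal-order distinguisher. -/
lemma caseA {kP kP' : ℕ} {P P' : Set W}
    (hP : IsProfile 𝒱.toSepUniverse (Sk 𝒱 kP) P)
    (hP' : IsProfile 𝒱.toSepUniverse (Sk 𝒱 kP') P')
    {r s' : W}
    (hinvr : 𝒱.inv r ∈ P) (hrP' : r ∈ P') (hordr : 𝒱.ord r = kOf 𝒱 P P')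
    (hs'P : 𝒱.inv s' ∈ P) (hs'P' : s' ∈ P') (hords' : 𝒱.ord s' ≤ 𝒱.ord r)
    (h1 : ¬ 𝒱.inv r ≤ s') (h2 : ¬ s' ≤ 𝒱.inv r) :
    r ⊔ s' ∈ Dmin 𝒱 P P' := by
  have hkP : 𝒱.ord r < kP := by
    have := prof_ord_lt hP hinvr
    rwa [𝒱.ord_inv] at this
  have hkP' : 𝒱.ord r < kP' := prof_ord_lt hP' hrP'
  have hstep : 𝒱.ord r ≤ 𝒱.ord (r ⊓ s') := by
    by_contra hlt
    push_neg at hlt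
    have hdP : r ⊓ s' ∉ P := by
      have h := hP.2.2 _ hinvr _ hs'P
      rwa [𝒱.inv_sup, 𝒱.inv_inv, 𝒱.inv_inv] at h
    have hinvdP : 𝒱.inv (r ⊓ s') ∈ P :=
      (prof_orient hP (lt_trans hlt hkP)).resolve_left hdP
    have hdP' : r ⊓ s' ∈ P' :=
      prof_down hP' hrP' inf_le_left (lt_trans hlt hkP')
        (fun h => h1 (by rw [← h]; exact inf_le_right))
    have hk := kOf_le (Or.inr ⟨hinvdP, hdP'⟩ :
      Distinguishes 𝒱.toSepUniverse (r ⊓ s') P P')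
    omega
  have hsub := 𝒱.submod r s'
  have hordc : 𝒱.ord (r ⊔ s') ≤ 𝒱.ord r := by omega
  have hcP' : r ⊔ s' ∈ P' := prof_sup hP' hrP' hs'P' (lt_of_le_of_lt hordc hkP')
  have hinvcP : 𝒱.inv (r ⊔ s') ∈ P := by
    refine prof_down hP hinvr ((𝒱.inv_le_inv _ _).2 le_sup_left) ?_ ?_
    · rw [𝒱.ord_inv]; exact lt_of_le_of_lt hordc hkP
    · intro h
      rw [𝒱.inv_inv] at h
      have he : r ⊔ s' = 𝒱.inv r := 𝒱.inv_inj (by rw [h, 𝒱.inv_inv])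
      exact h2 (by rw [← he]; exact le_sup_right)
  have hk := kOf_le (Or.inr ⟨hinvcP, hcP'⟩ :
    Distinguishes 𝒱.toSepUniverse (r ⊔ s') P P')
  exact ⟨hinvcP, hcP', by omega⟩

/-- The contradiction in the doubly-bad case, obtained on the side of the
lower-order pair using strong robustness. -/
lemma caseC {kA kB l : ℕ} {A B : Set W}
    (hA : IsProfile 𝒱.toSepUniverse (Sk 𝒱 kA) A)
    (hB : IsProfile 𝒱.toSepUniverse (Sk 𝒱 kB) B)
    (hrobB : StronglyRobust 𝒱 B)
    (hmin : ∀ t, Distinguishes 𝒱.toSepUniverse t A B → l ≤ 𝒱.ord t)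
    {u r : W} (huA : u ∈ A) (hiuB : 𝒱.inv u ∈ B) (hordu : 𝒱.ord u = l)
    (hm : 𝒱.ord (r ⊓ u) < l) (hc : 𝒱.ord (r ⊔ 𝒱.inv u) < l)
    (hru : ¬ r ≤ u) : False := by
  have hkA : l < kA := hordu ▸ prof_ord_lt hA huA
  have hkB : l < kB := by
    have := prof_ord_lt hB hiuB
    rwa [𝒱.ord_inv, hordu] at this
  have hmA : r ⊓ u ∈ A :=
    prof_down hA huA inf_le_right (by omega)
      (fun h => by
        have he : 𝒱.ord (r ⊓ u) = l := by rw [h, 𝒱.ord_inv, hordu]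
        omega)
  have hmB : r ⊓ u ∈ B := by
    rcases prof_orient hB (show 𝒱.ord (r ⊓ u) < kB by omega) with h | h
    · exact h
    · exact absurd (hmin _ (Or.inl ⟨hmA, h⟩)) (by omega)
  have hinvcA : 𝒱.inv (r ⊔ 𝒱.inv u) ∈ A := by
    have hle : 𝒱.inv (r ⊔ 𝒱.inv u) ≤ u := by
      rw [𝒱.inv_sup, 𝒱.inv_inv]; exact inf_le_right
    refine prof_down hA huA hle ?_ ?_
    · rw [𝒱.ord_inv]; omega
    · intro h
      have he : r ⊔ 𝒱.inv u = u := 𝒱.inv_inj h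
      exact hru (by rw [← he]; exact le_sup_left)
  have hinvcB : 𝒱.inv (r ⊔ 𝒱.inv u) ∈ B := by
    rcases prof_orient hB
        (show 𝒱.ord (𝒱.inv (r ⊔ 𝒱.inv u)) < kB by rw [𝒱.ord_inv]; omega) with h | h
    · exact h
    · rw [𝒱.inv_inv] at h
      exact absurd (hmin _ (Or.inr ⟨hinvcA, h⟩)) (by omega)
  have hrob := hrobB (𝒱.inv u) hiuB r
    (by rw [sup_comm, 𝒱.ord_inv]; omega)
    (by rw [← 𝒱.inv_inf, inf_comm, 𝒱.ord_inv, 𝒱.ord_inv]; omega)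
  rcases hrob with h | h
  · rw [sup_comm] at h
    exact prof_not_inv hB h hinvcB
  · rw [← 𝒱.inv_inf, inf_comm] at h
    exact prof_not_inv hB hmB h

end EffAux3
section EffAux4

variable {W : Type*} [DistribLattice W] [Fintype W] {𝒱 : SubmodUniverse W}

/-- Case of an equally oriented `u`: some corner is again a minimal-order
distinguisher, unless the doubly-bad situation (excluded by `hQ`) occurs. -/
lemma caseB {kP kP' : ℕ} {P P' : Set W}
    (hP : IsProfile 𝒱.toSepUniverse (Sk 𝒱 kP) P)
    (hP' : IsProfile 𝒱.toSepUniverse (Sk 𝒱 kP') P')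
    (hrobP' : StronglyRobust 𝒱 P')
    {r u : W}
    (hinvr : 𝒱.inv r ∈ P) (hrP' : r ∈ P') (hordr : 𝒱.ord r = kOf 𝒱 P P')
    (huP : u ∈ P) (huP' : u ∈ P') (hordu : 𝒱.ord u ≤ 𝒱.ord r)
    (hur : ¬ u ≤ r) (hru : ¬ r ≤ u)
    (hQ : 𝒱.ord (r ⊓ u) < 𝒱.ord u → 𝒱.ord (r ⊔ 𝒱.inv u) < 𝒱.ord u → False) :
    ∃ c, c ∈ Dmin 𝒱 P P' ∧ (c = r ⊔ u ∨ c = r ⊔ 𝒱.inv u ∨ c = r ⊓ 𝒱.inv u) := by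
  have hkP : 𝒱.ord r < kP := by
    have := prof_ord_lt hP hinvr
    rwa [𝒱.ord_inv] at this
  have hkP' : 𝒱.ord r < kP' := prof_ord_lt hP' hrP'
  by_cases h1 : 𝒱.ord (r ⊓ 𝒱.inv u) ≤ 𝒱.ord r
  · -- the corner r ⊓ u* works
    have hdP : r ⊓ 𝒱.inv u ∉ P := by
      have h := hP.2.2 _ hinvr _ huP
      rwa [𝒱.inv_sup, 𝒱.inv_inv] at h
    have hinvdP : 𝒱.inv (r ⊓ 𝒱.inv u) ∈ P :=
      (prof_orient hP (lt_of_le_of_lt h1 hkP)).resolve_left hdP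
    have hdP' : r ⊓ 𝒱.inv u ∈ P' := by
      refine prof_down hP' hrP' inf_le_left (lt_of_le_of_lt h1 hkP') ?_
      intro h
      refine hur ((𝒱.inv_le_inv _ _).1 ?_)
      rw [← h]; exact inf_le_right
    have hk := kOf_le (Or.inr ⟨hinvdP, hdP'⟩ :
      Distinguishes 𝒱.toSepUniverse (r ⊓ 𝒱.inv u) P P')
    exact ⟨r ⊓ 𝒱.inv u, ⟨hinvdP, hdP', by omega⟩, Or.inr (Or.inr rfl)⟩
  · push_neg at h1
    have hsub1 := 𝒱.submod r (𝒱.inv u)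
    rw [𝒱.ord_inv] at hsub1
    have hc : 𝒱.ord (r ⊔ 𝒱.inv u) < 𝒱.ord u := by omega
    by_cases h2 : 𝒱.ord (r ⊔ u) ≤ 𝒱.ord r
    · -- robustness applies
      rcases hrobP' r hrP' u h2 (by omega) with hx | hx
      · have hinvx : 𝒱.inv (r ⊔ u) ∈ P := by
          refine prof_down hP hinvr ((𝒱.inv_le_inv _ _).2 le_sup_left) ?_ ?_
          · rw [𝒱.ord_inv]; exact lt_of_le_of_lt h2 hkP
          · intro h
            rw [𝒱.inv_inv] at h
            have he : r ⊔ u = 𝒱.inv r := 𝒱.inv_inj (by rw [h, 𝒱.inv_inv])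
            exact prof_not_inv hP' hrP' (he ▸ hx)
        have hk := kOf_le (Or.inr ⟨hinvx, hx⟩ :
          Distinguishes 𝒱.toSepUniverse (r ⊔ u) P P')
        exact ⟨r ⊔ u, ⟨hinvx, hx, by omega⟩, Or.inl rfl⟩
      · have hordx : 𝒱.ord (r ⊔ 𝒱.inv u) ≤ 𝒱.ord r := by omega
        have hinvx : 𝒱.inv (r ⊔ 𝒱.inv u) ∈ P := by
          refine prof_down hP hinvr ((𝒱.inv_le_inv _ _).2 le_sup_left) ?_ ?_
          · rw [𝒱.ord_inv]; exact lt_of_le_of_lt hordx hkP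
          · intro h
            rw [𝒱.inv_inv] at h
            have he : r ⊔ 𝒱.inv u = 𝒱.inv r := 𝒱.inv_inj (by rw [h, 𝒱.inv_inv])
            exact prof_not_inv hP' hrP' (he ▸ hx)
        have hk := kOf_le (Or.inr ⟨hinvx, hx⟩ :
          Distinguishes 𝒱.toSepUniverse (r ⊔ 𝒱.inv u) P P')
        exact ⟨r ⊔ 𝒱.inv u, ⟨hinvx, hx, by omega⟩, Or.inr (Or.inl rfl)⟩
    · push_neg at h2
      have hsub2 := 𝒱.submod r u
      exact absurd (hQ (by omega) hc) not_false

/-- **Corner lemma**: if two minimal-order distinguishers cross, then some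
corner of them is a minimal-order distinguisher for the pair of larger order. -/
lemma corner_lemma {kP kP' kQ kQ' : ℕ} {P P' Q Q' : Set W}
    (hP : IsProfile 𝒱.toSepUniverse (Sk 𝒱 kP) P)
    (hP' : IsProfile 𝒱.toSepUniverse (Sk 𝒱 kP') P')
    (hQ : IsProfile 𝒱.toSepUniverse (Sk 𝒱 kQ) Q)
    (hQ' : IsProfile 𝒱.toSepUniverse (Sk 𝒱 kQ') Q')
    (hrobP' : StronglyRobust 𝒱 P') (hrobQ : StronglyRobust 𝒱 Q)
    (hrobQ' : StronglyRobust 𝒱 Q')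
    {r s : W}
    (hr : r ∈ Dmin 𝒱 P P') (hs : s ∈ Dmin 𝒱 Q Q')
    (hord : 𝒱.ord s ≤ 𝒱.ord r)
    (hcross : ¬ Nested 𝒱.toSepUniverse r s) :
    ∃ c, c ∈ Dmin 𝒱 P P' ∧
      (c = r ⊔ s ∨ c = r ⊔ 𝒱.inv s ∨ c = r ⊓ s ∨ c = r ⊓ 𝒱.inv s) := by
  obtain ⟨hinvr, hrP', hordr⟩ := hr
  obtain ⟨hinvsQ, hsQ', hords⟩ := hs
  have hkP : 𝒱.ord r < kP := by
    have := prof_ord_lt hP hinvr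
    rwa [𝒱.ord_inv] at this
  have hkP' : 𝒱.ord r < kP' := prof_ord_lt hP' hrP'
  have hsltP : 𝒱.ord s < kP := lt_of_le_of_lt hord hkP
  have hsltP' : 𝒱.ord s < kP' := lt_of_le_of_lt hord hkP'
  have nc1 : ¬ r ≤ s := fun h => hcross (Or.inl h)
  have nc2 : ¬ r ≤ 𝒱.inv s := fun h => hcross (Or.inr (Or.inl h))
  have nc3 : ¬ 𝒱.inv r ≤ s := fun h => hcross (Or.inr (Or.inr (Or.inl h)))
  have nc4 : ¬ 𝒱.inv r ≤ 𝒱.inv s := fun h => hcross (Or.inr (Or.inr (Or.inr h)))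
  have hminQ : ∀ t, Distinguishes 𝒱.toSepUniverse t Q Q' → 𝒱.ord s ≤ 𝒱.ord t :=
    fun t ht => by rw [hords]; exact kOf_le ht
  have hminQ' : ∀ t, Distinguishes 𝒱.toSepUniverse t Q' Q → 𝒱.ord s ≤ 𝒱.ord t :=
    fun t ht => hminQ t (distinguishes_comm ht)
  rcases prof_orient hP hsltP with hsP | hsiP
  · rcases prof_orient hP' hsltP' with hsP' | hsiP'
    · -- u := s lies in P ∩ P'
      obtain ⟨c, hc, htag⟩ := caseB hP hP' hrobP' hinvr hrP' hordr hsP hsP' hord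
        (fun h => nc4 ((𝒱.inv_le_inv _ _).2 h)) nc1
        (fun hm hc' => caseC hQ' hQ hrobQ hminQ' hsQ' hinvsQ rfl hm hc' nc1)
      refine ⟨c, hc, ?_⟩
      rcases htag with h | h | h
      · exact Or.inl h
      · exact Or.inr (Or.inl h)
      · exact Or.inr (Or.inr (Or.inr h))
    · -- s ∈ P, s* ∈ P' : opposite orientation, use s' := s*
      have hc := caseA hP hP' hinvr hrP' hordr (by rw [𝒱.inv_inv]; exact hsP) hsiP'
        (by rw [𝒱.ord_inv]; exact hord) nc4
        (fun h => nc1 ((𝒱.inv_le_inv _ _).1 h))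
      exact ⟨r ⊔ 𝒱.inv s, hc, Or.inr (Or.inl rfl)⟩
  · rcases prof_orient hP' hsltP' with hsP' | hsiP'
    · -- s* ∈ P, s ∈ P' : use s' := s
      have hc := caseA hP hP' hinvr hrP' hordr hsiP hsP' hord nc3
        (fun h => nc2 ((𝒱.le_inv_iff _ _).1 h))
      exact ⟨r ⊔ s, hc, Or.inl rfl⟩
    · -- u := s* lies in P ∩ P'
      have hQcont : 𝒱.ord (r ⊓ 𝒱.inv s) < 𝒱.ord (𝒱.inv s) →
          𝒱.ord (r ⊔ 𝒱.inv (𝒱.inv s)) < 𝒱.ord (𝒱.inv s) → False := by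
        intro hm hc'
        rw [𝒱.ord_inv] at hm hc'
        exact caseC hQ hQ' hrobQ' hminQ hinvsQ (by rw [𝒱.inv_inv]; exact hsQ')
          (𝒱.ord_inv s) hm hc' nc2
      obtain ⟨c, hc, htag⟩ := caseB hP hP' hrobP' hinvr hrP' hordr hsiP hsiP'
        (by rw [𝒱.ord_inv]; exact hord)
        (fun h => nc3 ((𝒱.inv_le_iff s r).1 h)) nc2 hQcont
      refine ⟨c, hc, ?_⟩
      rcases htag with h | h | h
      · exact Or.inr (Or.inl h)
      · rw [𝒱.inv_inv] at h; exact Or.inl h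
      · rw [𝒱.inv_inv] at h; exact Or.inr (Or.inr (Or.inl h))
end EffAux4
section EffAux5

variable {W : Type*} [DistribLattice W] [Fintype W]

/-- The splinter argument: nested choices of minimal-order distinguishers. -/
lemma splinter_lemma (𝒱 : SubmodUniverse W) (𝔓 : Set (Set W))
    (h𝔓 : ∀ P ∈ 𝔓, ProfileIn 𝒱 P ∧ StronglyRobust 𝒱 P)
    (hdist : ∀ P ∈ 𝔓, ∀ Q ∈ 𝔓, P ≠ Q → Distinguishable 𝒱.toSepUniverse P Q)
    (F : Finset (Set W × Set W))
    (hF : ∀ p ∈ F, p.1 ∈ 𝔓 ∧ p.2 ∈ 𝔓 ∧ p.1 ≠ p.2) :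
    ∃ T : Finset W,
      (∀ a ∈ T, ∀ b ∈ T, Nested 𝒱.toSepUniverse a b) ∧
      (∀ t ∈ T, ∃ p ∈ F, t ∈ Dmin 𝒱 p.1 p.2) ∧
      (∀ p ∈ F, ∃ t ∈ T, t ∈ Dmin 𝒱 p.1 p.2) := by
  classical
  induction F using Finset.strongInduction with
  | _ F ih => ?_
  rcases F.eq_empty_or_nonempty with rfl | hne
  · exact ⟨∅, by simp, by simp, by simp⟩
  obtain ⟨q, hqF, hqmax⟩ := F.exists_max_image (fun p => kOf 𝒱 p.1 p.2) hne
  obtain ⟨Tl, hTnest, hTsrc, hTcov⟩ :=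
    ih (F.erase q) (Finset.erase_ssubset hqF)
      (fun p hp => hF p (Finset.mem_of_mem_erase hp))
  obtain ⟨hq1, hq2, hqne⟩ := hF q hqF
  obtain ⟨⟨k1, hk1⟩, hrob1⟩ := h𝔓 q.1 hq1
  obtain ⟨⟨k2, hk2⟩, hrob2⟩ := h𝔓 q.2 hq2
  obtain ⟨x₀, hx₀⟩ := Dmin_nonempty (hdist q.1 hq1 q.2 hq2 hqne)
  have inner : ∀ n : ℕ, ∀ x, x ∈ Dmin 𝒱 q.1 q.2 →
      (Tl.filter (fun t => ¬ Nested 𝒱.toSepUniverse x t)).card = n →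
      ∃ x', x' ∈ Dmin 𝒱 q.1 q.2 ∧ ∀ t ∈ Tl, Nested 𝒱.toSepUniverse x' t := by
    intro n
    induction n using Nat.strong_induction_on with
    | _ n ihn => ?_
    intro x hx hcard
    by_cases hemp : ∀ t ∈ Tl, Nested 𝒱.toSepUniverse x t
    · exact ⟨x, hx, hemp⟩
    push_neg at hemp
    obtain ⟨t₀, ht₀T, ht₀x⟩ := hemp
    obtain ⟨p₀, hp₀F', ht₀D⟩ := hTsrc t₀ ht₀T
    have hp₀F : p₀ ∈ F := Finset.mem_of_mem_erase hp₀F'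
    obtain ⟨hp1, hp2, hpne⟩ := hF p₀ hp₀F
    obtain ⟨⟨m1, hm1⟩, hrobp1⟩ := h𝔓 p₀.1 hp1
    obtain ⟨⟨m2, hm2⟩, hrobp2⟩ := h𝔓 p₀.2 hp2
    have hordle : 𝒱.ord t₀ ≤ 𝒱.ord x := by
      rw [ht₀D.2.2, hx.2.2]
      exact hqmax p₀ hp₀F
    obtain ⟨c, hcD, htag⟩ :=
      corner_lemma hk1 hk2 hm1 hm2 hrob2 hrobp1 hrobp2 hx ht₀D hordle ht₀x
    have hct₀ : Nested 𝒱.toSepUniverse c t₀ := corner_nested htag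
    have hsubset : Tl.filter (fun t => ¬ Nested 𝒱.toSepUniverse c t) ⊆
        (Tl.filter (fun t => ¬ Nested 𝒱.toSepUniverse x t)).erase t₀ := by
      intro t ht
      rw [Finset.mem_filter] at ht
      obtain ⟨htT, hnc⟩ := ht
      rw [Finset.mem_erase, Finset.mem_filter]
      refine ⟨fun h => hnc (h ▸ hct₀), htT, fun hn => hnc ?_⟩
      exact nested_symm (fish ht₀x (nested_symm hn) (hTnest t htT t₀ ht₀T) htag)
    have hlt : (Tl.filter (fun t => ¬ Nested 𝒱.toSepUniverse c t)).card < n := by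
      have h1 : ((Tl.filter (fun t => ¬ Nested 𝒱.toSepUniverse x t)).erase t₀).card < n := by
        rw [← hcard]
        exact Finset.card_erase_lt_of_mem (Finset.mem_filter.2 ⟨ht₀T, ht₀x⟩)
      exact lt_of_le_of_lt (Finset.card_le_card hsubset) h1
    exact ihn _ hlt c hcD rfl
  obtain ⟨x', hx'D, hx'nest⟩ := inner _ x₀ hx₀ rfl
  refine ⟨insert x' Tl, ?_, ?_, ?_⟩
  · intro a ha b hb
    rcases Finset.mem_insert.1 ha with ha' | ha'
    · rcases Finset.mem_insert.1 hb with hb' | hb'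
      · rw [ha', hb']; exact nested_self 𝒱 x'
      · rw [ha']; exact hx'nest b hb'
    · rcases Finset.mem_insert.1 hb with hb' | hb'
      · rw [hb']; exact nested_symm (hx'nest a ha')
      · exact hTnest a ha' b hb'
  · intro t ht
    rcases Finset.mem_insert.1 ht with rfl | ht'
    · exact ⟨q, hqF, hx'D⟩
    · obtain ⟨p, hp, hpD⟩ := hTsrc t ht'
      exact ⟨p, Finset.mem_of_mem_erase hp, hpD⟩
  · intro p hp
    by_cases hpq : p = q
    · exact ⟨x', Finset.mem_insert_self _ _, hpq ▸ hx'D⟩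
    · obtain ⟨t, htT, htD⟩ := hTcov p (Finset.mem_erase.2 ⟨hpq, hp⟩)
      exact ⟨t, Finset.mem_insert_of_mem htT, htD⟩

end EffAux5
/-- Efficient tree-of-tangles theorem for different order
profiles: for every set `𝔓` of pairwise distinguishable strongly robust
profiles in a submodular distributive universe there is a nested set `T` such
that any two profiles in `𝔓` are efficiently distinguished by some separation
in `T`. -/
theorem efficient_tree_of_tangles_mixed_orders {W : Type*} [DistribLattice W] [Fintype W]
    (𝒱 : SubmodUniverse W) (𝔓 : Set (Set W))
    (h𝔓 : ∀ P ∈ 𝔓, ProfileIn 𝒱 P ∧ StronglyRobust 𝒱 P)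
    (hdist : ∀ P ∈ 𝔓, ∀ Q ∈ 𝔓, P ≠ Q → Distinguishable 𝒱.toSepUniverse P Q) :
    ∃ T : Set W, NestedSet 𝒱.toSepUniverse T ∧
      ∀ P ∈ 𝔓, ∀ Q ∈ 𝔓, P ≠ Q → ∃ s ∈ T, EffDistinguishes 𝒱 s P Q := by
  classical
  have hfin : {p : Set W × Set W | p.1 ∈ 𝔓 ∧ p.2 ∈ 𝔓 ∧ p.1 ≠ p.2}.Finite :=
    Set.toFinite _
  obtain ⟨T, hTnest, -, hTcov⟩ :=
    splinter_lemma 𝒱 𝔓 h𝔓 hdist hfin.toFinset (fun p hp => hfin.mem_toFinset.1 hp)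
  refine ⟨↑T, fun a ha b hb => hTnest a ha b hb, fun P hP Q hQ hne => ?_⟩
  obtain ⟨t, htT, htD⟩ := hTcov (P, Q) (hfin.mem_toFinset.2 ⟨hP, hQ, hne⟩)
  exact ⟨t, htT, Dmin_eff htD⟩

end SepDemo
end
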